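/- arXiv:1111.2532 — 3 statements merged into one kernel-verified Lean document; each statement's English description precedes it below -/
import Mathlib

section
/- Let (a_i) be a sequence of positive reals converging to a limit a > 0. Then the sequence b_n := min over 1 ≤ k ≤ n of (1/k) * (a_{n-k+1} + a_{n-k+2} + ... + a_n) converges to a as n → ∞. -/
/-!
Taking the window of length one gives `b_n ≤ a_n → L`. For the lower bound fix `c < L` and `N`
with `c ≤ a_i` for `i ≥ N`. A window inside `[N, ∞)` has average at least `c`. A window reaching
below `N` has length at least `n + 1 - N`, and in total the early terms fall short of `c` by at
most the constant `C = ∑_{i < N} (c - a_i)⁺`, so its average is at least `c - C / (n + 1 - N)`.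
Hence eventually every window average exceeds any given `x < L`.
-/

open Filter Finset

theorem Finset.sum_le_sum_range_posPart {α : Type*} [AddCommGroup α] [LinearOrder α]
    [IsOrderedAddMonoid α] {f : ℕ → α} {N : ℕ} (hf : ∀ i, N ≤ i → f i ≤ 0) (s : Finset ℕ) :
    ∑ i ∈ s, f i ≤ ∑ i ∈ range N, (f i)⁺ := by
  calc ∑ i ∈ s, f i ≤ ∑ i ∈ s, (f i)⁺ := sum_le_sum fun i _ ↦ le_posPart (f i)
    _ = ∑ i ∈ s ∩ range N, (f i)⁺ := by
      refine (sum_subset inter_subset_left fun i hs hi ↦ ?_).symm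
      exact posPart_of_nonpos (hf i (by simpa [hs] using hi))
    _ ≤ ∑ i ∈ range N, (f i)⁺ :=
      sum_le_sum_of_subset_of_nonneg inter_subset_right fun i _ _ ↦ posPart_nonneg (f i)

theorem card_mul_sub_le_sum {a : ℕ → ℝ} {c : ℝ} {N : ℕ} (h : ∀ i, N ≤ i → c ≤ a i)
    (s : Finset ℕ) : #s * c - ∑ i ∈ range N, (c - a i)⁺ ≤ ∑ i ∈ s, a i := by
  have := sum_le_sum_range_posPart (f := fun i ↦ c - a i) (fun i hi ↦ sub_nonpos.2 (h i hi)) s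
  rw [sum_sub_distrib, sum_const, nsmul_eq_mul] at this
  linarith

noncomputable def trailingAvg (a : ℕ → ℝ) (m k : ℕ) : ℝ :=
  (1 / (k : ℝ)) * ∑ i ∈ Icc (m - k + 1) m, a i

theorem trailingAvg_one (a : ℕ → ℝ) (m : ℕ) : trailingAvg a (m + 1) 1 = a (m + 1) := by
  simp [trailingAvg]

theorem sub_div_le_trailingAvg {a : ℕ → ℝ} {c : ℝ} {N : ℕ} (h : ∀ i, N ≤ i → c ≤ a i)
    {m k : ℕ} (hNm : N ≤ m) (hk : k ∈ Icc 1 m) :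
    c - (∑ i ∈ range N, (c - a i)⁺) / ((m : ℝ) + 2 - N) ≤ trailingAvg a m k := by
  set C := ∑ i ∈ range N, (c - a i)⁺
  obtain ⟨hk1, hkm⟩ := mem_Icc.1 hk
  have hcard : #(Icc (m - k + 1) m) = k := by rw [Nat.card_Icc]; omega
  have hk0 : (0 : ℝ) < k := by exact_mod_cast hk1
  have hC : 0 ≤ C := sum_nonneg fun i _ ↦ posPart_nonneg _
  have hden : (0 : ℝ) < m + 2 - N := by
    have : (N : ℝ) ≤ m := by exact_mod_cast hNm
    linarith
  rw [trailingAvg, one_div, inv_mul_eq_div, le_div_iff₀ hk0, sub_mul]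
  by_cases htail : N ≤ m - k + 1
  · have hsum : ∑ i ∈ Icc (m - k + 1) m, c ≤ ∑ i ∈ Icc (m - k + 1) m, a i :=
      sum_le_sum fun i hi ↦ h i (htail.trans (mem_Icc.1 hi).1)
    rw [sum_const, hcard, nsmul_eq_mul] at hsum
    have := mul_nonneg (div_nonneg hC hden.le) hk0.le
    linarith
  · have hlong : (m : ℝ) + 2 - N ≤ k := by
      have : (m : ℝ) + 2 ≤ k + N := by exact_mod_cast (by omega : m + 2 ≤ k + N)
      linarith
    have hC_le : C ≤ C / (m + 2 - N) * k := by
      rw [div_mul_eq_mul_div, le_div_iff₀ hden]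
      exact mul_le_mul_of_nonneg_left hlong hC
    have hsum := card_mul_sub_le_sum h (Icc (m - k + 1) m)
    rw [hcard] at hsum
    linarith

theorem eventually_forall_lt_trailingAvg {a : ℕ → ℝ} {L x : ℝ}
    (ha : Tendsto a atTop (nhds L)) (hx : x < L) :
    ∀ᶠ m in atTop, ∀ k ∈ Icc 1 m, x < trailingAvg a m k := by
  obtain ⟨c, hxc, hcL⟩ := exists_between hx
  obtain ⟨N, hN⟩ := eventually_atTop.1 (ha.eventually (eventually_ge_nhds hcL))
  have hden : Tendsto (fun m : ℕ ↦ (m : ℝ) + 2 - N) atTop atTop :=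
    tendsto_atTop_add_const_right _ _ <|
      tendsto_atTop_add_const_right _ _ tendsto_natCast_atTop_atTop
  have hlim : Tendsto (fun m : ℕ ↦ c - (∑ i ∈ range N, (c - a i)⁺) / ((m : ℝ) + 2 - N))
      atTop (nhds c) := by
    simpa using tendsto_const_nhds.sub (tendsto_const_nhds.div_atTop hden)
  filter_upwards [hlim.eventually (eventually_gt_nhds hxc), eventually_ge_atTop N]
    with m hm hNm k hk
  exact hm.trans_le (sub_div_le_trailingAvg hN hNm hk)

/-- If `a i` are positive reals converging to `L > 0`, then the minimum over
`1 ≤ k ≤ n` of the average of the last `k` terms `a (n-k+1), ..., a n`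
converges to `L`. -/
theorem stmt_0 (a : ℕ → ℝ) (L : ℝ)
    (ha : Tendsto a atTop (nhds L)) :
    Tendsto (fun n : ℕ =>
        (Finset.Icc 1 (n + 1)).inf' (Finset.nonempty_Icc.mpr (by omega))
          (fun k => (1 / (k : ℝ)) * ∑ i ∈ Finset.Icc (n + 1 - k + 1) (n + 1), a i))
      atTop (nhds L) := by
  change Tendsto (fun n ↦ (Icc 1 (n + 1)).inf' _ (trailingAvg a (n + 1))) atTop (nhds L)
  refine tendsto_order.2 ⟨fun x hx ↦ ?_, fun x hx ↦ ?_⟩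
  · filter_upwards [(tendsto_add_atTop_nat 1).eventually (eventually_forall_lt_trailingAvg ha hx)]
      with n hn
    exact (lt_inf'_iff _).2 hn
  · filter_upwards [(ha.comp (tendsto_add_atTop_nat 1)).eventually (eventually_lt_nhds hx)]
      with n hn
    calc _ ≤ trailingAvg a (n + 1) 1 := inf'_le _ (by simp)
      _ = a (n + 1) := trailingAvg_one a n
      _ < x := hn
end

section
/- Let (Y_j) be a martingale difference sequence with E(Y_j²) ≤ U for all j and some constant U, and fix γ ∈ (0, 1/4). Then the family of random variables max_{1≤k≤n} k^{γ−1} |∑_{j=1}^k Y_j|, indexed by n, is bounded in probability (i.e., O_P(1)): for every ε > 0 there exists a > 0 with P(max_{1≤k≤n} k^{γ−1}|∑_{j=1}^k Y_j| > a) < ε for all n. -/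
/-!
Squares of an L² martingale form a nonnegative submartingale, so Doob's maximal inequality gives
`P(max_{k ≤ N} |S_k| ≥ t) ≤ E[S_N²] / t²`, and orthogonality of martingale increments gives
`E[S_N²] ≤ U N`. Splitting `k` into dyadic blocks `2^m ≤ k < 2^(m+1)`, on the `m`-th block the event
`k^(γ-1) |S_k| > a` forces `max_{k ≤ 2^(m+1)} |S_k| ≥ a 2^(m(1-γ))`, whose probability is
`O(a⁻² (2^(2γ-1))^m)`. Since `γ < 1/2` these bounds sum to `O(a⁻²)`, uniformly in `n`.
-/

open MeasureTheory ProbabilityTheory Filter Topology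
open scoped ENNReal

section SquareIntegrableMartingale

variable {Ω : Type*} {m0 : MeasurableSpace Ω} {μ : Measure Ω}

theorem MeasureTheory.Martingale.submartingale_sq {ι : Type*} [Preorder ι] [IsFiniteMeasure μ]
    {ℱ : Filtration ι m0} {M : ι → Ω → ℝ} (hM : Martingale M ℱ μ)
    (hL2 : ∀ i, MemLp (M i) 2 μ) : Submartingale (fun i => M i ^ 2) ℱ μ := by
  refine ⟨fun i => (hM.stronglyAdapted i).pow 2, fun i j hij => ?_,
    fun i => (hL2 i).integrable_sq⟩
  have hVar : 0 ≤ᵐ[μ] Var[M j; μ | ℱ i] :=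
    condExp_nonneg (ae_of_all _ fun ω => sq_nonneg ((M j - μ[M j | ℱ i]) ω))
  filter_upwards [hVar, condVar_ae_eq_condExp_sq_sub_sq_condExp (ℱ.le i) (hL2 j),
    hM.condExp_ae_eq hij] with ω h0 hV hE
  simp only [Pi.sub_apply, Pi.pow_apply, hE] at hV
  simp only [Pi.zero_apply, Pi.pow_apply, hV] at h0 ⊢
  linarith

theorem MeasureTheory.Martingale.measure_exists_le_abs_le [IsFiniteMeasure μ]
    {ℱ : Filtration ℕ m0} {M : ℕ → Ω → ℝ} (hM : Martingale M ℱ μ) (hL2 : ∀ i, MemLp (M i) 2 μ)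
    {t : ℝ} (ht : 0 < t) (N : ℕ) :
    μ {ω | ∃ k ≤ N, t ≤ |M k ω|} ≤ ENNReal.ofReal ((∫ ω, M N ω ^ 2 ∂μ) / t ^ 2) := by
  have hdoob := maximal_ineq (hM.submartingale_sq hL2) (fun k ω => sq_nonneg (M k ω))
    (ε := (t ^ 2).toNNReal) N
  rw [Real.coe_toNNReal _ (by positivity)] at hdoob
  set E := {ω | t ^ 2 ≤ (Finset.range (N + 1)).sup' Finset.nonempty_range_add_one
    fun k => M k ω ^ 2}
  have hsub : {ω | ∃ k ≤ N, t ≤ |M k ω|} ⊆ E := by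
    rintro ω ⟨k, hkN, hk⟩
    refine le_trans ?_ (Finset.le_sup' (fun k => M k ω ^ 2) (Finset.mem_range_succ_iff.2 hkN))
    simpa only [sq_abs] using pow_le_pow_left₀ ht.le hk 2
  have hint : ∫ ω in E, M N ω ^ 2 ∂μ ≤ ∫ ω, M N ω ^ 2 ∂μ :=
    setIntegral_le_integral (hL2 N).integrable_sq (ae_of_all _ fun ω => sq_nonneg _)
  rw [ENNReal.ofReal_div_of_pos (by positivity), ENNReal.le_div_iff_mul_le (by simp [ht.ne'])
    (by simp), mul_comm]
  exact (mul_le_mul_right (measure_mono hsub) _).trans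
    (hdoob.trans (ENNReal.ofReal_le_ofReal hint))

theorem integral_mul_eq_zero_of_condExp_eq_zero {m : MeasurableSpace Ω} (hm : m ≤ m0)
    [SigmaFinite (μ.trim hm)] {X Z : Ω → ℝ} (hX : StronglyMeasurable[m] X)
    (hXZ : Integrable (X * Z) μ) (hZ : Integrable Z μ) (hZ0 : μ[Z | m] =ᵐ[μ] 0) :
    ∫ ω, X ω * Z ω ∂μ = 0 := by
  have hpull : μ[X * Z | m] =ᵐ[μ] 0 := by
    filter_upwards [condExp_mul_of_stronglyMeasurable_left hX hXZ hZ, hZ0] with ω h1 h2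
    simp [h1, h2]
  calc ∫ ω, X ω * Z ω ∂μ = ∫ ω, (μ[X * Z | m]) ω ∂μ := (integral_condExp hm).symm
    _ = 0 := by simp [integral_congr_ae hpull]

end SquareIntegrableMartingale

section PartialSum

variable {Ω : Type*} {m0 : MeasurableSpace Ω} {μ : Measure Ω}
variable {ℱ : Filtration ℕ m0} {Y : ℕ → Ω → ℝ}

def partialSum (Y : ℕ → Ω → ℝ) (k : ℕ) (ω : Ω) : ℝ := ∑ j ∈ Finset.Icc 1 k, Y j ω

theorem partialSum_succ (Y : ℕ → Ω → ℝ) (k : ℕ) :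
    partialSum Y (k + 1) = partialSum Y k + Y (k + 1) := by
  ext ω
  exact Finset.sum_Icc_succ_top (Nat.le_add_left 1 k) _

theorem stronglyAdapted_partialSum (hY : StronglyAdapted ℱ Y) :
    StronglyAdapted ℱ (partialSum Y) :=
  fun _ => Finset.stronglyMeasurable_fun_sum _ fun j hj =>
    (hY j).mono (ℱ.mono (Finset.mem_Icc.mp hj).2)

theorem memLp_partialSum {p : ℝ≥0∞} (hY : ∀ j, MemLp (Y j) p μ) (k : ℕ) :
    MemLp (partialSum Y k) p μ :=
  memLp_finsetSum _ fun j _ => hY j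

theorem martingale_partialSum [IsFiniteMeasure μ] (hY : StronglyAdapted ℱ Y)
    (hint : ∀ j, Integrable (Y j) μ)
    (hmd : ∀ k, μ[Y (k + 1) | ℱ k] =ᵐ[μ] 0) : Martingale (partialSum Y) ℱ μ := by
  refine martingale_of_condExp_sub_eq_zero_nat (stronglyAdapted_partialSum hY)
    (fun k => integrable_finsetSum _ fun j _ => hint j) fun k => ?_
  simpa only [partialSum_succ, add_sub_cancel_left] using hmd k

theorem integral_partialSum_sq_le [IsFiniteMeasure μ] (hY : StronglyAdapted ℱ Y)
    (hL2 : ∀ j, MemLp (Y j) 2 μ) (hmd : ∀ k, μ[Y (k + 1) | ℱ k] =ᵐ[μ] 0) {U : ℝ}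
    (hU : ∀ j, ∫ ω, Y j ω ^ 2 ∂μ ≤ U) (n : ℕ) :
    ∫ ω, partialSum Y n ω ^ 2 ∂μ ≤ U * n := by
  induction n with
  | zero => simp [partialSum]
  | succ n ih =>
    have hS := memLp_partialSum hL2 n
    have hsq : Integrable (fun ω => partialSum Y n ω ^ 2) μ := hS.integrable_sq
    have hmul : Integrable (fun ω => 2 * partialSum Y n ω * Y (n + 1) ω) μ :=
      (hS.const_mul 2).integrable_mul (hL2 _)
    have hexpand : (fun ω => partialSum Y (n + 1) ω ^ 2) = fun ω =>
        (partialSum Y n ω ^ 2 + 2 * partialSum Y n ω * Y (n + 1) ω) + Y (n + 1) ω ^ 2 := by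
      ext ω; simp only [partialSum_succ, Pi.add_apply]; ring
    have hcross : ∫ ω, 2 * partialSum Y n ω * Y (n + 1) ω ∂μ = 0 :=
      integral_mul_eq_zero_of_condExp_eq_zero (ℱ.le n)
        ((stronglyAdapted_partialSum hY n).const_mul 2) hmul ((hL2 _).integrable one_le_two)
        (hmd n)
    calc ∫ ω, partialSum Y (n + 1) ω ^ 2 ∂μ
        = ∫ ω, partialSum Y n ω ^ 2 ∂μ + ∫ ω, 2 * partialSum Y n ω * Y (n + 1) ω ∂μ
          + ∫ ω, Y (n + 1) ω ^ 2 ∂μ := by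
          rw [hexpand, integral_add (hsq.fun_add hmul) (hL2 _).integrable_sq, integral_add hsq hmul]
      _ ≤ U * n + 0 + U := by rw [hcross]; gcongr; exact hU _
      _ = U * ↑(n + 1) := by push_cast; ring

end PartialSum

section DyadicBlocks

variable {Ω : Type*} {m0 : MeasurableSpace Ω} {μ : Measure Ω}

theorem setOf_exists_weighted_gt_subset_iUnion_dyadic (S : ℕ → Ω → ℝ) {a γ : ℝ} (ha : 0 ≤ a)
    (hγ : γ ≤ 1) (n : ℕ) :
    {ω | ∃ k ∈ Finset.Icc 1 n, a < (k : ℝ) ^ (γ - 1) * |S k ω|} ⊆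
      ⋃ m : ℕ, {ω | ∃ k ≤ 2 ^ (m + 1), a * ((2 : ℝ) ^ m) ^ (1 - γ) ≤ |S k ω|} := by
  rintro ω ⟨k, hk, hak⟩
  have hk1 : 1 ≤ k := (Finset.mem_Icc.mp hk).1
  have hkpos : (0 : ℝ) < k := by exact_mod_cast hk1
  have hlow : 2 ^ Nat.log 2 k ≤ k := Nat.pow_log_le_self 2 (by omega)
  have hhigh : k < 2 ^ (Nat.log 2 k + 1) := Nat.lt_pow_succ_log_self one_lt_two k
  refine Set.mem_iUnion.mpr ⟨Nat.log 2 k, k, hhigh.le, ?_⟩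
  have hcancel : (k : ℝ) ^ (1 - γ) * (k : ℝ) ^ (γ - 1) = 1 := by
    rw [← Real.rpow_add hkpos]; simp
  calc a * ((2 : ℝ) ^ Nat.log 2 k) ^ (1 - γ) ≤ a * (k : ℝ) ^ (1 - γ) := by
        gcongr
        · exact_mod_cast hlow
    _ ≤ (k : ℝ) ^ (1 - γ) * ((k : ℝ) ^ (γ - 1) * |S k ω|) := by
        rw [mul_comm a]; gcongr
    _ = |S k ω| := by rw [← mul_assoc, hcancel, one_mul]

theorem dyadic_bound_eq (C a γ : ℝ) (m : ℕ) :
    C * ((2 ^ (m + 1) : ℕ) : ℝ) / (a * ((2 : ℝ) ^ m) ^ (1 - γ)) ^ 2 =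
      2 * C / a ^ 2 * ((2 : ℝ) ^ (2 * γ - 1)) ^ m := by
  have hx : (0 : ℝ) < 2 ^ m := by positivity
  have hr : ((2 : ℝ) ^ (2 * γ - 1)) ^ m = ((2 : ℝ) ^ m) ^ (2 * γ - 1) := by
    rw [← Real.rpow_mul_natCast zero_le_two, ← Real.rpow_natCast_mul zero_le_two, mul_comm]
  have hsplit : ((2 : ℝ) ^ m) ^ (2 * γ - 1) * (((2 : ℝ) ^ m) ^ (1 - γ)) ^ 2 = 2 ^ m := by
    rw [sq, ← Real.rpow_add hx, ← Real.rpow_add hx]; ring_nf; exact Real.rpow_one _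
  have hpos : (0 : ℝ) < ((2 : ℝ) ^ m) ^ (1 - γ) := by positivity
  have hcast : ((2 ^ (m + 1) : ℕ) : ℝ) = 2 * (2 : ℝ) ^ m := by push_cast; ring
  rw [hcast, hr]
  -- abstract the powers so that `← hsplit` only rewrites the free `2 ^ m`
  set y := ((2 : ℝ) ^ m) ^ (1 - γ)
  set z := ((2 : ℝ) ^ m) ^ (2 * γ - 1)
  rw [← hsplit]
  field_simp

theorem measure_exists_weighted_gt_le {S : ℕ → Ω → ℝ} {C : ℝ} (hC : 0 ≤ C)
    (hS : ∀ t > 0, ∀ N : ℕ, μ {ω | ∃ k ≤ N, t ≤ |S k ω|} ≤ ENNReal.ofReal (C * N / t ^ 2))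
    {γ : ℝ} (hγ : γ < 1 / 2) {a : ℝ} (ha : 0 < a) (n : ℕ) :
    μ {ω | ∃ k ∈ Finset.Icc 1 n, a < (k : ℝ) ^ (γ - 1) * |S k ω|} ≤
      ENNReal.ofReal (2 * C / (1 - 2 ^ (2 * γ - 1)) / a ^ 2) := by
  set r : ℝ := 2 ^ (2 * γ - 1)
  have hr0 : 0 ≤ r := by positivity
  have hr1 : r < 1 := Real.rpow_lt_one_of_one_lt_of_neg one_lt_two (by linarith)
  calc μ {ω | ∃ k ∈ Finset.Icc 1 n, a < (k : ℝ) ^ (γ - 1) * |S k ω|}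
      ≤ μ (⋃ m : ℕ, {ω | ∃ k ≤ 2 ^ (m + 1), a * ((2 : ℝ) ^ m) ^ (1 - γ) ≤ |S k ω|}) :=
        measure_mono (setOf_exists_weighted_gt_subset_iUnion_dyadic S ha.le (by linarith) n)
    _ ≤ ∑' m : ℕ, μ {ω | ∃ k ≤ 2 ^ (m + 1), a * ((2 : ℝ) ^ m) ^ (1 - γ) ≤ |S k ω|} :=
        measure_iUnion_le _
    _ ≤ ∑' m : ℕ, ENNReal.ofReal (2 * C / a ^ 2 * r ^ m) := by
        gcongr with m
        rw [← dyadic_bound_eq]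
        exact hS _ (by positivity) _
    _ = ENNReal.ofReal (2 * C / (1 - r) / a ^ 2) := by
        rw [← ENNReal.ofReal_tsum_of_nonneg (fun m => by positivity)
          ((summable_geometric_of_lt_one hr0 hr1).mul_left _), tsum_mul_left,
          tsum_geometric_of_lt_one hr0 hr1]
        congr 1
        field_simp

theorem exists_pos_forall_measure_exists_weighted_gt_lt {S : ℕ → Ω → ℝ} {C : ℝ} (hC : 0 ≤ C)
    (hS : ∀ t > 0, ∀ N : ℕ, μ {ω | ∃ k ≤ N, t ≤ |S k ω|} ≤ ENNReal.ofReal (C * N / t ^ 2))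
    {γ : ℝ} (hγ : γ < 1 / 2) :
    ∀ ε > (0 : ℝ), ∃ a > (0 : ℝ), ∀ n : ℕ,
      (μ {ω | ∃ k ∈ Finset.Icc 1 n, a < (k : ℝ) ^ (γ - 1) * |S k ω|}).toReal < ε := by
  intro ε hε
  set K := 2 * C / (1 - 2 ^ (2 * γ - 1))
  have hK : Tendsto (fun a : ℝ => K / a ^ 2) atTop (𝓝 0) :=
    tendsto_const_nhds.div_atTop (tendsto_pow_atTop two_ne_zero)
  obtain ⟨a, haε, ha⟩ := ((hK.eventually (gt_mem_nhds hε)).and (eventually_gt_atTop 0)).exists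
  refine ⟨a, ha, fun n => ?_⟩
  calc (μ {ω | ∃ k ∈ Finset.Icc 1 n, a < (k : ℝ) ^ (γ - 1) * |S k ω|}).toReal
      ≤ (ENNReal.ofReal (K / a ^ 2)).toReal :=
        ENNReal.toReal_mono ENNReal.ofReal_ne_top (measure_exists_weighted_gt_le hC hS hγ ha n)
    _ ≤ max (K / a ^ 2) 0 := by rw [ENNReal.toReal_ofReal']
    _ < ε := max_lt haε hε

end DyadicBlocks

/-- For a martingale difference sequence `Y` with uniformly bounded second
moments and `γ ∈ (0, 1/4)`, the maxima `max_{1≤k≤n} k^{γ-1} |∑_{j=1}^k Y j|`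
are bounded in probability, uniformly in `n`. -/
theorem stmt_10 {Ω : Type*} {m0 : MeasurableSpace Ω} {μ : Measure Ω}
    [IsProbabilityMeasure μ] (ℱ : Filtration ℕ m0) (Y : ℕ → Ω → ℝ)
    (hadp : ∀ j, StronglyMeasurable[ℱ j] (Y j))
    (hL2 : ∀ j, MemLp (Y j) 2 μ)
    (hmd : ∀ j : ℕ, 1 ≤ j → μ[Y j | ℱ (j - 1)] =ᵐ[μ] 0)
    (U : ℝ) (hU : ∀ j, ∫ ω, (Y j ω) ^ 2 ∂μ ≤ U)
    (γ : ℝ) (hγ : γ ∈ Set.Ioo (0 : ℝ) (1 / 4)) :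
    ∀ ε > (0 : ℝ), ∃ a > (0 : ℝ), ∀ n : ℕ,
      (μ {ω | ∃ k ∈ Finset.Icc 1 n,
          a < (k : ℝ) ^ (γ - 1) * |∑ j ∈ Finset.Icc 1 k, Y j ω|}).toReal < ε := by
  have hmd' : ∀ k, μ[Y (k + 1) | ℱ k] =ᵐ[μ] 0 := fun k => hmd (k + 1) k.succ_pos
  have hM : Martingale (partialSum Y) ℱ μ :=
    martingale_partialSum hadp (fun j => (hL2 j).integrable one_le_two) hmd'
  have hU0 : 0 ≤ U := (integral_nonneg fun ω => sq_nonneg _).trans (hU 0)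
  have hmax : ∀ t > 0, ∀ N : ℕ, μ {ω | ∃ k ≤ N, t ≤ |partialSum Y k ω|} ≤
      ENNReal.ofReal (U * N / t ^ 2) := fun t ht N =>
    (hM.measure_exists_le_abs_le (memLp_partialSum hL2) ht N).trans <|
      ENNReal.ofReal_le_ofReal <| by
        gcongr; exact integral_partialSum_sq_le hadp hL2 hmd' hU N
  exact exists_pos_forall_measure_exists_weighted_gt_lt hU0 hmax (by linarith [hγ.2])
end

section
/- Let (X_k)_{k≥0} be an ergodic ℕ₀^p-valued Markov chain whose distribution converges to a stationary distribution π in total variation: ∑_x |P(X_n = x) − π(x)| → 0. Let ρ ∈ (0,1) and let g: ℕ₀^p → ℝ satisfy E|g(X̃)| < ∞ where X̃ ~ π. If for every starting state x the ergodic averages (1/m) ∑_{k=1}^m g(X_k) converge in probability to E g(X̃) under P(·|X_0 = x), then (1/(n − ⌊nρ⌋)) ∑_{k=⌊nρ⌋+1}^n g(X_k) converges in probability to E g(X̃) as n → ∞. -/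
open MeasureTheory ProbabilityTheory Filter Topology

/-!
Condition on the state `X ⌊nρ⌋₊`. By time-homogeneity, given `X ⌊nρ⌋₊ = x` the average over the
window `(⌊nρ⌋₊, n]` has the law of the ergodic average of length `n - ⌊nρ⌋₊` started at `x`, so
for each fixed `x` the conditional probability of an `ε`-deviation tends to `0`. The unconditional
probability is the mixture of these over the law of `X ⌊nρ⌋₊`; replacing that law by the
stationary distribution `w` costs its total variation distance to `w`, and the `w`-mixture tends
to `0` by dominated convergence.
-/

theorem Finset.sum_Icc_succ_eq_sum_Icc_one_add {M : Type*} [AddCommMonoid M] (f : ℕ → M)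
    (m n : ℕ) : ∑ k ∈ Finset.Icc (m + 1) n, f k = ∑ j ∈ Finset.Icc 1 (n - m), f (m + j) := by
  rcases le_or_gt m n with h | h
  · obtain ⟨d, rfl⟩ := Nat.exists_eq_add_of_le h
    rw [Nat.add_sub_cancel_left, ← Finset.map_add_left_Icc, Finset.sum_map]
    rfl
  · simp [Finset.Icc_eq_empty_of_lt (by omega : n < m + 1), Nat.sub_eq_zero_of_le h.le]

theorem tendsto_nat_floor_natCast_mul_atTop {ρ : ℝ} (hρ : 0 < ρ) :
    Tendsto (fun n : ℕ => ⌊(n : ℝ) * ρ⌋₊) atTop atTop :=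
  tendsto_nat_floor_atTop.comp (tendsto_natCast_atTop_atTop.atTop_mul_const hρ)

theorem tendsto_sub_nat_floor_natCast_mul_atTop {ρ : ℝ} (hρ0 : 0 ≤ ρ) (hρ1 : ρ < 1) :
    Tendsto (fun n : ℕ => n - ⌊(n : ℝ) * ρ⌋₊) atTop atTop := by
  refine tendsto_atTop_mono (fun n => Nat.le_sub_of_add_le ?_)
    (tendsto_nat_floor_natCast_mul_atTop (sub_pos.2 hρ1))
  have h1 : (⌊(n : ℝ) * (1 - ρ)⌋₊ : ℝ) ≤ n * (1 - ρ) :=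
    Nat.floor_le (mul_nonneg n.cast_nonneg (sub_nonneg.2 hρ1.le))
  have h2 : (⌊(n : ℝ) * ρ⌋₊ : ℝ) ≤ n * ρ := Nat.floor_le (mul_nonneg n.cast_nonneg hρ0)
  exact_mod_cast (by linarith : (⌊(n : ℝ) * (1 - ρ)⌋₊ + ⌊(n : ℝ) * ρ⌋₊ : ℝ) ≤ n)

theorem cond_preimage_shift_le {Ω β : Type*} {m0 : MeasurableSpace Ω} [MeasurableSpace β]
    {μ : Measure Ω} {X : ℕ → Ω → β} (hmeas : ∀ k, Measurable (X k)) {m : ℕ} {x : β}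
    (hhom : μ {ω | X m ω = x} ≠ 0 →
      Measure.map (fun ω (k : ℕ) => X (m + k) ω) (μ[|{ω | X m ω = x}])
        = Measure.map (fun ω (k : ℕ) => X k ω) (μ[|{ω | X 0 ω = x}]))
    {S : Set (ℕ → β)} (hS : MeasurableSet S) :
    μ[(fun ω k => X (m + k) ω) ⁻¹' S | {ω | X m ω = x}]
      ≤ μ[(fun ω k => X k ω) ⁻¹' S | {ω | X 0 ω = x}] := by
  by_cases hx : μ {ω | X m ω = x} = 0
  · simp [cond_eq_zero_of_meas_eq_zero hx]
  · have hpath : ∀ m, Measurable fun ω (k : ℕ) => X (m + k) ω := fun m =>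
      measurable_pi_lambda _ fun k => hmeas (m + k)
    rw [← Measure.map_apply (hpath m) hS, hhom hx,
      ← Measure.map_apply (by simpa using hpath 0) hS]

theorem measure_eq_tsum_mul_cond {Ω α : Type*} {m0 : MeasurableSpace Ω} [Countable α]
    [MeasurableSpace α] [MeasurableSingletonClass α] {Y : Ω → α} (hY : Measurable Y)
    (μ : Measure Ω) [IsFiniteMeasure μ] (E : Set Ω) :
    μ E = ∑' x, μ (Y ⁻¹' {x}) * μ[E | Y ⁻¹' {x}] := by
  have hfib : ∀ x, MeasurableSet (Y ⁻¹' {x}) := fun x => hY (measurableSet_singleton x)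
  calc μ E = μ.restrict E (⋃ x, Y ⁻¹' {x}) := by
        rw [← Set.preimage_iUnion, Set.iUnion_of_singleton, Set.preimage_univ,
          Measure.restrict_apply_univ]
    _ = ∑' x, μ (Y ⁻¹' {x} ∩ E) := by
        rw [measure_iUnion (fun x y hxy => (Set.disjoint_singleton.2 hxy).preimage Y) hfib]
        simp only [Measure.restrict_apply (hfib _)]
    _ = _ := by simp only [mul_comm (μ _), cond_mul_eq_inter (hfib _)]

theorem tendsto_tsum_mul_of_tendsto_tsum_abs_sub {ι α : Type*} {l : Filter ι}
    {q c : ι → α → ℝ} {w : α → ℝ} (hq : ∀ i, Summable (q i)) (hw : Summable w)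
    (hqw : Tendsto (fun i => ∑' x, |q i x - w x|) l (𝓝 0))
    (hc : ∀ x, Tendsto (fun i => c i x) l (𝓝 0)) (hc1 : ∀ i x, |c i x| ≤ 1) :
    Tendsto (fun i => ∑' x, q i x * c i x) l (𝓝 0) := by
  have hwc : Tendsto (fun i => ∑' x, |w x| * |c i x|) l (𝓝 0) := by
    simpa only [tsum_zero] using tendsto_tsum_of_dominated_convergence (g := fun _ => (0 : ℝ))
      (f := fun i x => |w x| * |c i x|) hw.abs
      (fun x => by simpa using (hc x).abs.const_mul |w x|)
      (Eventually.of_forall fun i x => by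
        simpa using mul_le_of_le_one_right (abs_nonneg (w x)) (hc1 i x))
  refine squeeze_zero_norm (fun i => ?_) (by simpa using hqw.add hwc)
  have hqw_summ : Summable fun x => |q i x - w x| := ((hq i).sub hw).abs
  have hwc_summ : Summable fun x => |w x| * |c i x| :=
    hw.abs.of_nonneg_of_le (fun x => by positivity)
      (fun x => mul_le_of_le_one_right (abs_nonneg (w x)) (hc1 i x))
  have hqc_summ : Summable fun x => ‖q i x * c i x‖ :=
    (hq i).abs.of_nonneg_of_le (fun x => norm_nonneg _)
      (fun x => by simpa [abs_mul] using mul_le_of_le_one_right (abs_nonneg (q i x)) (hc1 i x))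
  calc ‖∑' x, q i x * c i x‖ ≤ ∑' x, ‖q i x * c i x‖ := norm_tsum_le_tsum_norm hqc_summ
    _ ≤ ∑' x, (|q i x - w x| + |w x| * |c i x|) := by
        refine hqc_summ.tsum_le_tsum (fun x => ?_) (hqw_summ.add hwc_summ)
        have hq_le : |q i x| - |w x| ≤ |q i x - w x| := abs_sub_abs_le_abs_sub _ _
        rw [Real.norm_eq_abs, abs_mul]
        nlinarith [abs_nonneg (c i x), abs_nonneg (q i x - w x), hc1 i x]
    _ = _ := hqw_summ.tsum_add hwc_summ

theorem tendsto_measure_of_tendsto_cond_preimage_singleton {Ω α ι : Type*}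
    {m0 : MeasurableSpace Ω} [Countable α] [MeasurableSpace α] [MeasurableSingletonClass α]
    {μ : Measure Ω} [IsFiniteMeasure μ] {l : Filter ι} {Y : ι → Ω → α}
    (hY : ∀ i, Measurable (Y i)) {w : α → ℝ} (hw : Summable w)
    (hlaw : Tendsto (fun i => ∑' x, |(μ (Y i ⁻¹' {x})).toReal - w x|) l (𝓝 0))
    {E : ι → Set Ω} (hE : ∀ x, Tendsto (fun i => μ[E i | Y i ⁻¹' {x}]) l (𝓝 0)) :
    Tendsto (fun i => μ (E i)) l (𝓝 0) := by
  have hdecomp : ∀ i, (μ (E i)).toReal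
      = ∑' x, (μ (Y i ⁻¹' {x})).toReal * (μ[E i | Y i ⁻¹' {x}]).toReal := fun i => by
    rw [measure_eq_tsum_mul_cond (hY i) μ (E i),
      ENNReal.tsum_toReal_eq fun x => ENNReal.mul_ne_top (measure_ne_top μ _) (by finiteness)]
    simp only [ENNReal.toReal_mul]
  have hlaw_summ : ∀ i, Summable fun x => (μ (Y i ⁻¹' {x})).toReal := fun i => by
    refine ENNReal.summable_toReal ?_
    rw [← tsum_univ, tsum_measure_preimage_singleton Set.countable_univ
      fun x _ => hY i (measurableSet_singleton x)]
    exact measure_ne_top μ _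
  rw [← ENNReal.tendsto_toReal_zero_iff (fun i => measure_ne_top μ _)]
  simp only [hdecomp]
  refine tendsto_tsum_mul_of_tendsto_tsum_abs_sub hlaw_summ hw hlaw
    (fun x => (ENNReal.tendsto_toReal_zero_iff (fun i => by finiteness)).2 (hE x))
    (fun i x => ?_)
  rw [abs_of_nonneg ENNReal.toReal_nonneg]
  exact ENNReal.toReal_le_of_le_ofReal zero_le_one (by simpa using prob_le_one)

theorem stmt_18_general {Ω : Type*} {m0 : MeasurableSpace Ω} {μ : Measure Ω}
    [IsProbabilityMeasure μ] (p : ℕ) (X : ℕ → Ω → (Fin p → ℕ))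
    (hmeas : ∀ k, Measurable (X k))
    (hhom : ∀ (m : ℕ) (x : Fin p → ℕ), μ {ω | X m ω = x} ≠ 0 →
      Measure.map (fun ω (k : ℕ) => X (m + k) ω) (μ[|{ω | X m ω = x}])
        = Measure.map (fun ω (k : ℕ) => X k ω) (μ[|{ω | X 0 ω = x}]))
    (w : (Fin p → ℕ) → ℝ) (hw1 : HasSum w 1)
    (hTV : Tendsto
      (fun n : ℕ => ∑' x : Fin p → ℕ, |(μ {ω | X n ω = x}).toReal - w x|)
      atTop (nhds 0))
    (ρ : ℝ) (hρ : ρ ∈ Set.Ioo (0 : ℝ) 1)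
    (g : (Fin p → ℕ) → ℝ)
    (herg : ∀ x : Fin p → ℕ, μ {ω | X 0 ω = x} ≠ 0 → ∀ ε > (0 : ℝ),
      Tendsto (fun m : ℕ =>
          μ[|{ω | X 0 ω = x}] {ω | ε ≤
            |(1 / (m : ℝ)) * ∑ k ∈ Finset.Icc 1 m, g (X k ω)
              - ∑' y, g y * w y|})
        atTop (nhds 0)) :
    ∀ ε > (0 : ℝ),
      Tendsto (fun n : ℕ =>
          μ {ω | ε ≤
            |(1 / ((n - ⌊(n : ℝ) * ρ⌋₊ : ℕ) : ℝ)) *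
                ∑ k ∈ Finset.Icc (⌊(n : ℝ) * ρ⌋₊ + 1) n, g (X k ω)
              - ∑' y, g y * w y|})
        atTop (nhds 0) := by
  obtain ⟨hρ0, hρ1⟩ := hρ
  intro ε hε
  let S : ℕ → Set (ℕ → Fin p → ℕ) := fun l =>
    {y | ε ≤ |(1 / (l : ℝ)) * ∑ j ∈ Finset.Icc 1 l, g (y j) - ∑' y, g y * w y|}
  have hS : ∀ l, MeasurableSet (S l) := fun l =>
    have : Measurable g := measurable_of_countable g
    measurableSet_le measurable_const (by fun_prop)
  have hpath : ∀ x, Tendsto (fun l => μ[(fun ω k => X k ω) ⁻¹' S l | {ω | X 0 ω = x}])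
      atTop (𝓝 0) := fun x => by
    by_cases hx : μ {ω | X 0 ω = x} = 0
    · simp [cond_eq_zero_of_meas_eq_zero hx]
    · exact herg x hx ε hε
  have hwindow : ∀ n : ℕ, {ω | ε ≤ |(1 / ((n - ⌊(n : ℝ) * ρ⌋₊ : ℕ) : ℝ)) *
        ∑ k ∈ Finset.Icc (⌊(n : ℝ) * ρ⌋₊ + 1) n, g (X k ω) - ∑' y, g y * w y|}
      = (fun ω k => X (⌊(n : ℝ) * ρ⌋₊ + k) ω) ⁻¹' S (n - ⌊(n : ℝ) * ρ⌋₊) := fun n => by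
    ext ω
    simp only [Set.mem_preimage, Set.mem_ofPred_eq, S,
      Finset.sum_Icc_succ_eq_sum_Icc_one_add _ ⌊(n : ℝ) * ρ⌋₊ n]
  simp only [hwindow]
  refine tendsto_measure_of_tendsto_cond_preimage_singleton (fun n => hmeas _)
    hw1.summable (hTV.comp (tendsto_nat_floor_natCast_mul_atTop hρ0)) fun x => ?_
  exact tendsto_of_tendsto_of_tendsto_of_le_of_le tendsto_const_nhds
    ((hpath x).comp (tendsto_sub_nat_floor_natCast_mul_atTop hρ0.le hρ1)) (fun _ => bot_le)
    fun n => cond_preimage_shift_le hmeas (hhom _ x) (hS _)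

/-- For an ergodic time-homogeneous Markov chain on `ℕ₀^p` whose marginal laws
converge in total variation to the stationary distribution `w`, if for every
starting state the ergodic averages of `g` converge in probability to the
stationary mean, then the averages over the window `(⌊nρ⌋, n]` also converge in
probability to the stationary mean. -/
theorem stmt_18 {Ω : Type*} {m0 : MeasurableSpace Ω} {μ : Measure Ω}
    [IsProbabilityMeasure μ] (p : ℕ) (X : ℕ → Ω → (Fin p → ℕ))
    (hmeas : ∀ k, Measurable (X k))
    (hhom : ∀ (m : ℕ) (x : Fin p → ℕ), μ {ω | X m ω = x} ≠ 0 →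
      Measure.map (fun ω (k : ℕ) => X (m + k) ω) (μ[|{ω | X m ω = x}])
        = Measure.map (fun ω (k : ℕ) => X k ω) (μ[|{ω | X 0 ω = x}]))
    (w : (Fin p → ℕ) → ℝ) (hw0 : ∀ x, 0 ≤ w x) (hw1 : HasSum w 1)
    (hTV : Tendsto
      (fun n : ℕ => ∑' x : Fin p → ℕ, |(μ {ω | X n ω = x}).toReal - w x|)
      atTop (nhds 0))
    (ρ : ℝ) (hρ : ρ ∈ Set.Ioo (0 : ℝ) 1)
    (g : (Fin p → ℕ) → ℝ) (hg : Summable (fun x => |g x| * w x))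
    (herg : ∀ x : Fin p → ℕ, μ {ω | X 0 ω = x} ≠ 0 → ∀ ε > (0 : ℝ),
      Tendsto (fun m : ℕ =>
          μ[|{ω | X 0 ω = x}] {ω | ε ≤
            |(1 / (m : ℝ)) * ∑ k ∈ Finset.Icc 1 m, g (X k ω)
              - ∑' y, g y * w y|})
        atTop (nhds 0)) :
    ∀ ε > (0 : ℝ),
      Tendsto (fun n : ℕ =>
          μ {ω | ε ≤
            |(1 / ((n - ⌊(n : ℝ) * ρ⌋₊ : ℕ) : ℝ)) *
                ∑ k ∈ Finset.Icc (⌊(n : ℝ) * ρ⌋₊ + 1) n, g (X k ω)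
              - ∑' y, g y * w y|})
        atTop (nhds 0) :=
  stmt_18_general (m0 := m0) p X hmeas hhom w hw1 hTV ρ hρ g herg
end
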